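/- Let M be an invertible real n×n matrix, A a skew-symmetric n×n matrix, and P' = MᵀM. Define K_A = ∫₀^∞ e^{−tP'}(P'A² − A²P')e^{−tP'} dt. Then the matrix MA² − MK_A is orthogonal, with respect to the Frobenius inner product, to MB for every skew-symmetric matrix B; that is, MA² − MK_A lies in the Frobenius-orthogonal complement of the tangent space M·so(n) of the orbit M·O(n) at M. -/

import Mathlib

open Matrix MeasureTheory

/-! `K = K_A` solves the Lyapunov equation `P'K + KP' = P'A² - A²P'`: writing the positive
definite `P' = MᵀM` as `U diag(d) Uᵀ` with `U` orthogonal, the integral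
`∫₀^∞ e^{-tP'} C e^{-tP'} dt` is `U G Uᵀ` with `G_kl = (UᵀCU)_kl / (d_k + d_l)`. Moreover `K` is
skew because its integrand is, so the Lyapunov equation says exactly that `P'(A² - K)` is
symmetric. Finally `⟨M X, M B⟩ = tr(P' X Bᵀ)`, and a symmetric matrix is Frobenius-orthogonal
to every skew `B`. -/

theorem integral_exp_neg_mul_Ioi_zero {c : ℝ} (hc : 0 < c) :
    ∫ t in Set.Ioi (0 : ℝ), Real.exp (-t * c) = c⁻¹ := by
  simp_rw [neg_mul_comm, mul_comm _ (-c)]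
  rw [integral_exp_mul_Ioi (neg_neg_of_pos hc), mul_zero, Real.exp_zero, div_neg, neg_div,
    neg_neg, one_div]

theorem integral_mul_mul_apply {α m n p q : Type*} [Fintype n] [Fintype p] [MeasurableSpace α]
    {μ : Measure α} (X : Matrix m n ℝ) (G : α → n → p → ℝ) (Y : Matrix p q ℝ)
    (hG : ∀ k l, Integrable (fun t => G t k l) μ) (i : m) (j : q) :
    ∫ t, (X * of (G t) * Y) i j ∂μ = (X * (of fun k l => ∫ t, G t k l ∂μ) * Y) i j := by
  simp only [mul_apply, of_apply]
  rw [integral_finsetSum _ fun l _ =>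
    (integrable_finsetSum _ fun k _ => (hG k l).const_mul _).mul_const _]
  refine Finset.sum_congr rfl fun l _ => ?_
  rw [integral_mul_const, integral_finsetSum _ fun k _ => (hG k l).const_mul _]
  simp only [integral_const_mul]

namespace Matrix

theorem trace_mul_eq_zero_of_transpose_eq_neg {ι R : Type*} [Fintype ι] [CommRing R]
    [IsAddTorsionFree R] {S B : Matrix ι ι R} (hS : Sᵀ = S) (hB : Bᵀ = -B) :
    (S * B).trace = 0 := by
  rw [← self_eq_neg]
  conv_lhs => rw [← trace_transpose, transpose_mul, hS, hB, neg_mul, trace_neg, trace_mul_comm]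

variable {ι : Type*} [Fintype ι] [DecidableEq ι]

noncomputable def lyapunovIntegral (P C : Matrix ι ι ℝ) : Matrix ι ι ℝ :=
  of fun i j => ∫ t in Set.Ioi (0 : ℝ),
    (NormedSpace.exp ((-t) • P) * C * NormedSpace.exp ((-t) • P)) i j

theorem exp_smul_conj_diagonal {U : Matrix ι ι ℝ} (hU : U ∈ unitary (Matrix ι ι ℝ))
    (d : ι → ℝ) (s : ℝ) :
    NormedSpace.exp (s • (U * diagonal d * star U)) =
      U * diagonal (fun k => Real.exp (s * d k)) * star U := by
  have hUinv : U⁻¹ = star U := inv_eq_right_inv (Unitary.mul_star_self_of_mem hU)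
  have hUunit : IsUnit U := ⟨Unitary.toUnits ⟨U, hU⟩, rfl⟩
  rw [← hUinv, ← smul_mul_assoc, ← mul_smul_comm, ← diagonal_smul, exp_conj _ _ hUunit,
    exp_diagonal, Pi.exp_def]
  simp only [Pi.smul_apply, smul_eq_mul, Real.exp_eq_exp_ℝ]

theorem exp_smul_mul_mul_exp_smul {U : Matrix ι ι ℝ} (hU : U ∈ unitary (Matrix ι ι ℝ))
    (d : ι → ℝ) (C : Matrix ι ι ℝ) (s : ℝ) :
    NormedSpace.exp (s • (U * diagonal d * star U)) * C *
        NormedSpace.exp (s • (U * diagonal d * star U)) =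
      U * (of fun k l => (star U * C * U) k l * Real.exp (s * (d k + d l))) * star U := by
  rw [exp_smul_conj_diagonal hU]
  calc _ = U * (diagonal (fun k => Real.exp (s * d k)) * (star U * C * U) *
        diagonal (fun k => Real.exp (s * d k))) * star U := by simp only [mul_assoc]
    _ = _ := by
      congr 2
      ext k l
      simp only [diagonal_mul, mul_diagonal, of_apply, mul_add, Real.exp_add]
      ring

theorem lyapunovIntegral_conj_diagonal {U : Matrix ι ι ℝ} (hU : U ∈ unitary (Matrix ι ι ℝ))
    {d : ι → ℝ} (hd : ∀ k, 0 < d k) (C : Matrix ι ι ℝ) :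
    lyapunovIntegral (U * diagonal d * star U) C =
      U * (of fun k l => (star U * C * U) k l / (d k + d l)) * star U := by
  have hint : ∀ k l, IntegrableOn (fun t => Real.exp (-t * (d k + d l))) (Set.Ioi 0) :=
    fun k l => (exp_neg_integrableOn_Ioi 0 (add_pos (hd k) (hd l))).congr_fun
      (fun t _ => by ring_nf) measurableSet_Ioi
  ext i j
  simp only [lyapunovIntegral, of_apply, exp_smul_mul_mul_exp_smul hU]
  rw [integral_mul_mul_apply U
    (fun t k l => (star U * C * U) k l * Real.exp (-t * (d k + d l))) (star U)
    fun k l => (hint k l).const_mul _]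
  simp only [integral_const_mul, integral_exp_neg_mul_Ioi_zero (add_pos (hd _) (hd _)),
    div_eq_mul_inv]

theorem mul_lyapunovIntegral_add_lyapunovIntegral_mul_of_conj_diagonal
    {U : Matrix ι ι ℝ} (hU : U ∈ unitary (Matrix ι ι ℝ)) {d : ι → ℝ}
    (hd : ∀ k, 0 < d k) (C : Matrix ι ι ℝ) :
    U * diagonal d * star U * lyapunovIntegral (U * diagonal d * star U) C +
        lyapunovIntegral (U * diagonal d * star U) C * (U * diagonal d * star U) = C := by
  have hcancel : ∀ X : Matrix ι ι ℝ, star U * (U * X) = X := fun X => by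
    rw [← mul_assoc, Unitary.star_mul_self_of_mem hU, one_mul]
  have hsolve : diagonal d * (of fun k l => (star U * C * U) k l / (d k + d l)) +
      (of fun k l => (star U * C * U) k l / (d k + d l)) * diagonal d = star U * C * U := by
    ext k l
    have : d k + d l ≠ 0 := (add_pos (hd k) (hd l)).ne'
    simp only [add_apply, diagonal_mul, mul_diagonal, of_apply]
    field_simp
  calc _ = U * ((diagonal d * (of fun k l => (star U * C * U) k l / (d k + d l)) +
        (of fun k l => (star U * C * U) k l / (d k + d l)) * diagonal d) * star U) := by
        rw [lyapunovIntegral_conj_diagonal hU hd]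
        simp only [add_mul, mul_add, mul_assoc, hcancel]
    _ = C := by
        rw [hsolve, mul_assoc, mul_assoc, Unitary.mul_star_self_of_mem hU, mul_one, ← mul_assoc,
          Unitary.mul_star_self_of_mem hU, one_mul]

theorem PosDef.mul_lyapunovIntegral_add_lyapunovIntegral_mul {P : Matrix ι ι ℝ} (hP : P.PosDef)
    (C : Matrix ι ι ℝ) : P * lyapunovIntegral P C + lyapunovIntegral P C * P = C := by
  have hspec : P = hP.1.eigenvectorUnitary * diagonal hP.1.eigenvalues *
      star (hP.1.eigenvectorUnitary : Matrix ι ι ℝ) := by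
    simpa only [RCLike.ofReal_real_eq_id, Function.id_comp, Unitary.conjStarAlgAut_apply]
      using hP.1.spectral_theorem
  rw [hspec]
  exact mul_lyapunovIntegral_add_lyapunovIntegral_mul_of_conj_diagonal
    hP.1.eigenvectorUnitary.2 hP.eigenvalues_pos C

theorem lyapunovIntegral_transpose {P : Matrix ι ι ℝ} (hP : Pᵀ = P) (C : Matrix ι ι ℝ) :
    (lyapunovIntegral P C)ᵀ = lyapunovIntegral P Cᵀ := by
  ext i j
  simp only [lyapunovIntegral, transpose_apply, of_apply]
  congr 1 with t
  rw [← transpose_apply (_ * _ * _), transpose_mul, transpose_mul, ← exp_transpose,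
    transpose_smul, hP, mul_assoc]

theorem lyapunovIntegral_neg (P C : Matrix ι ι ℝ) :
    lyapunovIntegral P (-C) = -lyapunovIntegral P C := by
  ext i j
  simp only [lyapunovIntegral, of_apply, neg_apply, mul_neg, neg_mul, ← integral_neg]

end Matrix

/-- For invertible `M`, skew-symmetric `A`, and `P' = Mᵀ M`, with
`K_A = ∫₀^∞ e^{-tP'}(P'A² - A²P')e^{-tP'} dt`, the matrix `M A² - M K_A` is
Frobenius-orthogonal to `M B` for every skew-symmetric `B`, i.e. it lies in the
orthogonal complement of the tangent space `M · so(n)` of the orbit `M · O(n)`. -/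
theorem second_fundamental_form_normal (n : ℕ) (M A : Matrix (Fin n) (Fin n) ℝ)
    (hM : IsUnit M.det) (hA : Aᵀ = -A) :
    ∀ P' KA : Matrix (Fin n) (Fin n) ℝ, P' = Mᵀ * M →
      KA = (Matrix.of fun i j : Fin n => ∫ t in Set.Ioi (0 : ℝ),
        (NormedSpace.exp ((-t) • P') * (P' * A ^ 2 - A ^ 2 * P') *
          NormedSpace.exp ((-t) • P')) i j) →
      ∀ B : Matrix (Fin n) (Fin n) ℝ, Bᵀ = -B →
        ((M * A ^ 2 - M * KA) * (M * B)ᵀ).trace = 0 := by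
  intro P' KA hP' hKA B hB
  change KA = lyapunovIntegral P' (P' * A ^ 2 - A ^ 2 * P') at hKA
  have hP'pos : P'.PosDef := by
    rw [hP', ← conjTranspose_eq_transpose_of_trivial]
    exact .conjTranspose_mul_self M <|
      mulVec_injective_iff_isUnit.mpr <| (isUnit_iff_isUnit_det M).mpr hM
  have hP'symm : P'ᵀ = P' := by rw [hP', transpose_mul, transpose_transpose]
  have hA2 : (A ^ 2)ᵀ = A ^ 2 := by rw [transpose_pow, hA, neg_sq]
  have hKAskew : KAᵀ = -KA := by
    rw [hKA, lyapunovIntegral_transpose hP'symm, transpose_sub, transpose_mul, transpose_mul,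
      hA2, hP'symm, ← neg_sub, lyapunovIntegral_neg]
  have hlyap : P' * KA + KA * P' = P' * A ^ 2 - A ^ 2 * P' :=
    hKA ▸ hP'pos.mul_lyapunovIntegral_add_lyapunovIntegral_mul _
  have hsymm : (P' * (A ^ 2 - KA))ᵀ = P' * (A ^ 2 - KA) := by
    rw [transpose_mul, transpose_sub, hA2, hKAskew, hP'symm, sub_neg_eq_add, mul_sub, add_mul]
    rw [← sub_eq_zero] at hlyap ⊢
    rw [← hlyap]
    abel
  calc ((M * A ^ 2 - M * KA) * (M * B)ᵀ).trace = (Mᵀ * (M * (A ^ 2 - KA) * Bᵀ)).trace := by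
        rw [← mul_sub, transpose_mul, ← mul_assoc, trace_mul_comm]
    _ = -(P' * (A ^ 2 - KA) * B).trace := by
        rw [hP', hB, mul_neg, mul_neg, trace_neg, mul_assoc, mul_assoc, mul_assoc]
    _ = 0 := by rw [trace_mul_eq_zero_of_transpose_eq_neg hsymm hB, neg_zero]
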